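/- For every η ∈ [0,1], r_k(η) → min(η, 1−η) as k → ∞ along odd integers k. -/

import Mathlib

/-!
Write `k = 2n + 1` and let `S` be the probability that a `Binomial(k, η)` variable exceeds `n`.
Reflecting `i ↦ k - i` turns the second half of each summand of `r_k` into the complementary
tail of `Binomial(k, 1 - η)`, so `r_k(η) = η + (1 - 2η) S`. For `η ≤ 1/2` every term of `S`
is at most `η^(n+1) (1-η)^n`, whence `S ≤ 2η (4η(1-η))^n`, which tends to `0` when `η < 1/2`;
at `η = 1/2` the factor `1 - 2η` vanishes. The case `η > 1/2` follows from `r_k(1-η) = r_k(η)`.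
-/

noncomputable def rk (k : ℕ) (η : ℝ) : ℝ :=
  ∑ i ∈ Finset.Icc ((k + 1) / 2) k,
    (k.choose i : ℝ) * (η ^ i * (1 - η) ^ (k - i + 1) + (1 - η) ^ i * η ^ (k - i + 1))

open Finset Filter Topology

noncomputable def binomTail (k m : ℕ) (p : ℝ) : ℝ :=
  ∑ i ∈ Icc m k, p ^ i * (1 - p) ^ (k - i) * (k.choose i : ℝ)

lemma binomTail_nonneg (k m : ℕ) {p : ℝ} (h0 : 0 ≤ p) (h1 : p ≤ 1) : 0 ≤ binomTail k m p := by
  have : 0 ≤ 1 - p := by linarith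
  exact sum_nonneg fun i _ => by positivity

lemma binomTail_one_sub (k m : ℕ) (p : ℝ) :
    binomTail k m (1 - p) = 1 - binomTail k (k + 1 - m) p := by
  set f : ℕ → ℝ := fun j => p ^ j * (1 - p) ^ (k - j) * (k.choose j : ℝ)
  have h_reflect : binomTail k m (1 - p) = ∑ j ∈ Ico m (k + 1), f (k - j) := by
    rw [binomTail, ← Ico_add_one_right_eq_Icc]
    refine sum_congr rfl fun i hi => ?_
    have hik : i ≤ k := Nat.lt_succ_iff.mp (mem_Ico.mp hi).2
    simp only [f, Nat.sub_sub_self hik, Nat.choose_symm hik, sub_sub_cancel]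
    ring
  have h_total : ∑ j ∈ range (k + 1), f j = 1 := by
    simp only [f, ← add_pow, add_sub_cancel, one_pow]
  rw [h_reflect, sum_Ico_reflect f m le_rfl, Nat.sub_self, ← range_eq_Ico, ← h_total,
    ← sum_range_add_sum_Ico f (Nat.sub_le (k + 1) m), binomTail, ← Ico_add_one_right_eq_Icc]
  ring

lemma rk_eq_binomTail (k : ℕ) (η : ℝ) :
    rk k η = (1 - η) * binomTail k ((k + 1) / 2) η + η * binomTail k ((k + 1) / 2) (1 - η) := by
  simp only [rk, binomTail, mul_sum, ← sum_add_distrib, sub_sub_cancel, pow_succ]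
  exact sum_congr rfl fun i _ => by ring

lemma rk_odd_eq (n : ℕ) (η : ℝ) :
    rk (2 * n + 1) η = η + (1 - 2 * η) * binomTail (2 * n + 1) (n + 1) η := by
  have hmid : (2 * n + 1 + 1) / 2 = n + 1 := by omega
  have hcompl : 2 * n + 1 + 1 - (n + 1) = n + 1 := by omega
  rw [rk_eq_binomTail, hmid, binomTail_one_sub, hcompl]
  ring

lemma rk_one_sub (k : ℕ) (η : ℝ) : rk k (1 - η) = rk k η := by
  simp only [rk, sub_sub_cancel]
  exact sum_congr rfl fun i _ => by ring

lemma pow_mul_pow_sub_le {p q : ℝ} (hp : 0 ≤ p) (hpq : p ≤ q) {m i k : ℕ} (hmi : m ≤ i)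
    (hik : i ≤ k) : p ^ i * q ^ (k - i) ≤ p ^ m * q ^ (k - m) := by
  have hq : 0 ≤ q := hp.trans hpq
  calc p ^ i * q ^ (k - i) = p ^ m * (p ^ (i - m) * q ^ (k - i)) := by
        rw [← mul_assoc, ← pow_add, Nat.add_sub_cancel' hmi]
    _ ≤ p ^ m * (q ^ (i - m) * q ^ (k - i)) := by gcongr
    _ = p ^ m * q ^ (k - m) := by rw [← pow_add]; congr 2; omega

lemma binomTail_le {p : ℝ} (h0 : 0 ≤ p) (hhalf : p ≤ 1 / 2) (k m : ℕ) :
    binomTail k m p ≤ 2 ^ k * (p ^ m * (1 - p) ^ (k - m)) := by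
  have hchoose : ∑ i ∈ Icc m k, (k.choose i : ℝ) ≤ 2 ^ k := by
    have : ∑ i ∈ Icc m k, k.choose i ≤ 2 ^ k := by
      rw [← Nat.sum_range_choose k]
      exact sum_le_sum_of_subset fun i hi => by
        simp only [mem_Icc, mem_range] at hi ⊢; omega
    exact_mod_cast this
  calc binomTail k m p ≤ ∑ i ∈ Icc m k, p ^ m * (1 - p) ^ (k - m) * (k.choose i : ℝ) := by
        refine sum_le_sum fun i hi => ?_
        obtain ⟨hmi, hik⟩ := mem_Icc.mp hi
        exact mul_le_mul_of_nonneg_right (pow_mul_pow_sub_le h0 (by linarith) hmi hik)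
          (Nat.cast_nonneg _)
    _ = (∑ i ∈ Icc m k, (k.choose i : ℝ)) * (p ^ m * (1 - p) ^ (k - m)) := by
        rw [sum_mul]; exact sum_congr rfl fun i _ => by ring
    _ ≤ 2 ^ k * (p ^ m * (1 - p) ^ (k - m)) := by
        have : 0 ≤ 1 - p := by linarith
        gcongr

lemma binomTail_odd_le {p : ℝ} (h0 : 0 ≤ p) (hhalf : p ≤ 1 / 2) (n : ℕ) :
    binomTail (2 * n + 1) (n + 1) p ≤ 2 * p * (4 * p * (1 - p)) ^ n := by
  calc binomTail (2 * n + 1) (n + 1) p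
      ≤ 2 ^ (2 * n + 1) * (p ^ (n + 1) * (1 - p) ^ (2 * n + 1 - (n + 1))) :=
        binomTail_le h0 hhalf _ _
    _ = 2 * p * (4 * p * (1 - p)) ^ n := by
        rw [show 2 * n + 1 - (n + 1) = n by omega, mul_pow, mul_pow, pow_succ, pow_succ, pow_mul]
        ring

lemma tendsto_binomTail_odd {p : ℝ} (h0 : 0 ≤ p) (hlt : p < 1 / 2) :
    Tendsto (fun n : ℕ => binomTail (2 * n + 1) (n + 1) p) atTop (𝓝 0) := by
  have hgeom : Tendsto (fun n : ℕ => 2 * p * (4 * p * (1 - p)) ^ n) atTop (𝓝 0) := by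
    simpa using (tendsto_pow_atTop_nhds_zero_of_lt_one (by nlinarith) (by nlinarith)).const_mul
      (2 * p)
  exact squeeze_zero (fun n => binomTail_nonneg _ _ h0 (by linarith))
    (binomTail_odd_le h0 hlt.le) hgeom

lemma tendsto_rk_odd_of_le_half {η : ℝ} (h0 : 0 ≤ η) (hhalf : η ≤ 1 / 2) :
    Tendsto (fun n : ℕ => rk (2 * n + 1) η) atTop (𝓝 η) := by
  simp only [rk_odd_eq]
  suffices Tendsto (fun n : ℕ => (1 - 2 * η) * binomTail (2 * n + 1) (n + 1) η) atTop (𝓝 0) by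
    simpa using tendsto_const_nhds.add this
  rcases hhalf.lt_or_eq with hlt | rfl
  · simpa using (tendsto_binomTail_odd h0 hlt).const_mul (1 - 2 * η)
  · norm_num

theorem stmt_4 : ∀ η ∈ Set.Icc (0 : ℝ) 1,
    Filter.Tendsto (fun n : ℕ => rk (2 * n + 1) η) Filter.atTop
      (nhds (min η (1 - η))) := by
  rintro η ⟨h0, h1⟩
  rcases le_total η (1 / 2) with h | h
  · rw [min_eq_left (by linarith)]
    exact tendsto_rk_odd_of_le_half h0 h
  · rw [min_eq_right (by linarith)]
    simpa only [rk_one_sub] using tendsto_rk_odd_of_le_half (η := 1 - η) (by linarith) (by linarith)
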